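/- Let U be a finite set of size u, let n ≥ 1 and m ≥ 0 be natural numbers, and set ε₀ = 2^{−m/n}. Let F be any family of subsets of U with |F| ≤ 2^m. Then the number of subsets S ⊆ U with |S| = n for which there exists P ∈ F with S ⊆ P and |P| ≤ ε₀·u/8 is at most 2^{−n}·C(u,n). Equivalently, if S is a uniformly random n-element subset of U, the probability that some P ∈ F satisfies S ⊆ P and |P| ≤ ε₀·u/8 is at most 2^{−n}. -/

import Mathlib

/-!
Every bad set `S` lies in one of the at most `2 ^ m` small members `P ∈ F`, and a set `P` with
`|P| ≤ δ u` contains at most `δ ^ n · C(u, n)` of the `n`-subsets of `U`. With `δ = ε₀ / 8` and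
`ε₀ ^ n = 2 ^ (-m)`, the union bound gives at most `2 ^ m (ε₀ / 8) ^ n C(u, n) = 8 ^ (-n) C(u, n)`
bad sets.
-/

open Finset

namespace Nat

theorem descFactorial_mul_pow_le {k u : ℕ} (h : k ≤ u) (n : ℕ) :
    k.descFactorial n * u ^ n ≤ k ^ n * u.descFactorial n := by
  induction n with
  | zero => simp
  | succ n ih =>
    have hstep : (k - n) * u ≤ k * (u - n) := by
      rw [Nat.sub_mul, Nat.mul_sub]
      exact Nat.sub_le_sub_left (by rw [mul_comm]; exact Nat.mul_le_mul_left n h) _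
    calc k.descFactorial (n + 1) * u ^ (n + 1)
        = ((k - n) * u) * (k.descFactorial n * u ^ n) := by
          rw [descFactorial_succ, pow_succ]; ring
      _ ≤ (k * (u - n)) * (k ^ n * u.descFactorial n) := Nat.mul_le_mul hstep ih
      _ = k ^ (n + 1) * u.descFactorial (n + 1) := by rw [descFactorial_succ, pow_succ]; ring

theorem choose_mul_pow_le {k u : ℕ} (h : k ≤ u) (n : ℕ) :
    k.choose n * u ^ n ≤ k ^ n * u.choose n := by
  refine Nat.le_of_mul_le_mul_left ?_ n.factorial_pos
  calc n ! * (k.choose n * u ^ n) = k.descFactorial n * u ^ n := by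
        rw [descFactorial_eq_factorial_mul_choose]; ring
    _ ≤ k ^ n * u.descFactorial n := descFactorial_mul_pow_le h n
    _ = n ! * (k ^ n * u.choose n) := by rw [descFactorial_eq_factorial_mul_choose]; ring

theorem cast_choose_le_pow_mul_choose {k u : ℕ} {δ : ℝ} (h : k ≤ u) (hk : (k : ℝ) ≤ δ * u)
    (n : ℕ) : (k.choose n : ℝ) ≤ δ ^ n * u.choose n := by
  rcases u.eq_zero_or_pos with rfl | hu
  · obtain rfl : k = 0 := Nat.le_zero.mp h
    cases n <;> simp
  have hkδ : (k : ℝ) / u ≤ δ := (div_le_iff₀ (by positivity)).mpr hk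
  calc (k.choose n : ℝ) ≤ ((k : ℝ) / u) ^ n * u.choose n := by
        rw [div_pow, div_mul_eq_mul_div, le_div_iff₀ (by positivity)]
        exact_mod_cast choose_mul_pow_le h n
    _ ≤ δ ^ n * u.choose n := by gcongr

end Nat

theorem Finset.card_biUnion_powersetCard_le {U : Type*} [Fintype U] [DecidableEq U]
    (G : Finset (Finset U)) {δ : ℝ} (hG : ∀ P ∈ G, (#P : ℝ) ≤ δ * Fintype.card U) (n : ℕ) :
    (#(G.biUnion (powersetCard n)) : ℝ) ≤ #G * (δ ^ n * (Fintype.card U).choose n) := by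
  have hP : ∀ P ∈ G, (#(powersetCard n P) : ℝ) ≤ δ ^ n * (Fintype.card U).choose n :=
    fun P hPG => card_powersetCard n P ▸
      Nat.cast_choose_le_pow_mul_choose P.card_le_univ (hG P hPG) n
  calc (#(G.biUnion (powersetCard n)) : ℝ) ≤ ∑ P ∈ G, (#(powersetCard n P) : ℝ) := by
        exact_mod_cast card_biUnion_le
    _ ≤ ∑ _P ∈ G, δ ^ n * (Fintype.card U).choose n := sum_le_sum hP
    _ = #G * (δ ^ n * (Fintype.card U).choose n) := by rw [sum_const, nsmul_eq_mul]

/-- Encoding/counting claim: for a universe `U` of size `u`, `ε₀ = 2^{-m/n}`, and any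
family `F` of at most `2^m` subsets of `U`, the number of `n`-element subsets `S ⊆ U`
for which some `P ∈ F` satisfies `S ⊆ P` and `|P| ≤ ε₀·u/8` is at most
`2^{-n}·C(u,n)`. -/
theorem few_bad_sets (U : Type*) [Fintype U] [DecidableEq U] (u n m : ℕ)
    (hu : Fintype.card U = u) (hn : 1 ≤ n) (ε₀ : ℝ)
    (hε₀ : ε₀ = (2 : ℝ) ^ (-(m : ℝ) / (n : ℝ)))
    (F : Finset (Finset U)) (hF : (F.card : ℝ) ≤ 2 ^ m) :
    ((Finset.univ.filter (fun S : Finset U => S.card = n ∧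
        ∃ P ∈ F, S ⊆ P ∧ (P.card : ℝ) ≤ ε₀ * u / 8)).card : ℝ)
      ≤ (2 : ℝ) ^ (-(n : ℝ)) * (u.choose n : ℝ) := by
  subst hu
  set G := F.filter fun P => (#P : ℝ) ≤ ε₀ / 8 * Fintype.card U
  have hbad : univ.filter (fun S : Finset U => #S = n ∧
      ∃ P ∈ F, S ⊆ P ∧ (#P : ℝ) ≤ ε₀ * Fintype.card U / 8) ⊆ G.biUnion (powersetCard n) := by
    intro S hS
    simp only [mem_filter, mem_univ, true_and] at hS
    obtain ⟨hSn, P, hPF, hSP, hPsmall⟩ := hS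
    exact mem_biUnion.mpr ⟨P, mem_filter.mpr ⟨hPF, by linarith⟩, mem_powersetCard.mpr ⟨hSP, hSn⟩⟩
  have hε₀n : 2 ^ m * ε₀ ^ n = 1 := by
    rw [hε₀, ← Real.rpow_natCast _ n, ← Real.rpow_mul zero_le_two,
      div_mul_cancel₀ _ (Nat.cast_ne_zero.mpr (Nat.one_le_iff_ne_zero.mp hn)),
      Real.rpow_neg zero_le_two, Real.rpow_natCast,
      mul_inv_cancel₀ (by positivity)]
  have hε₀pos : 0 < ε₀ := hε₀ ▸ by positivity
  calc _ ≤ (#(G.biUnion (powersetCard n)) : ℝ) := by exact_mod_cast card_le_card hbad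
    _ ≤ #G * ((ε₀ / 8) ^ n * (Fintype.card U).choose n) :=
        card_biUnion_powersetCard_le G (fun P hP => (mem_filter.mp hP).2) n
    _ ≤ 2 ^ m * ((ε₀ / 8) ^ n * (Fintype.card U).choose n) := by
        gcongr
        exact (by exact_mod_cast card_filter_le F _ : (#G : ℝ) ≤ #F).trans hF
    _ = (1 / 8) ^ n * (Fintype.card U).choose n := by
        linear_combination ((1 / 8) ^ n * ((Fintype.card U).choose n : ℝ)) * hε₀n
    _ ≤ (2 : ℝ) ^ (-(n : ℝ)) * (Fintype.card U).choose n := by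
        rw [Real.rpow_neg zero_le_two, Real.rpow_natCast, ← inv_pow]
        gcongr
        norm_num
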